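/- Let T > 0, τ > 0, f_max > 0, a > 0, E_F0 ≥ 0, and let glyc : ℝ → ℝ be continuous with 0 ≤ glyc(v) ≤ 1 for all v. Let f : [0,T] → ℝ be measurable with 0 ≤ f(t) ≤ f_max a.e. Then the fat energy E_F[f] is nonincreasing on [0,T] and satisfies E_F[f](t) ≥ E_F0 - a τ f_max² t for all t ∈ [0,T]; in particular, if E_F0 > a τ f_max² T, then E_F[f](t) > 0 for all t ∈ [0,T] (the fat-energy constraint is never tight for any admissible control). -/

import Mathlib

open MeasureTheory Real Set

/-- The velocity of the runner: solution of `V' = f - V/τ`, `V 0 = 0`. -/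
noncomputable def runnerV (τ : ℝ) (f : ℝ → ℝ) (t : ℝ) : ℝ :=
  ∫ u in (0:ℝ)..t, Real.exp (-(t - u) / τ) * f u

/-- The fat energy of the runner. -/
noncomputable def runnerEF (τ a EF0 : ℝ) (glyc : ℝ → ℝ) (f : ℝ → ℝ) (t : ℝ) : ℝ :=
  EF0 - a * ∫ u in (0:ℝ)..t, f u * runnerV τ f u * (1 - glyc (runnerV τ f u))

/-!
`runnerV τ f` is the convolution of `f` with the kernel `exp (-s / τ)`, whose integral over
`[0, t]` is `τ (1 - exp (-t / τ)) ≤ τ`; hence `0 ≤ V ≤ τ fmax`. The rate `f V (1 - glyc V)` at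
which fat is burned then lies in `[0, τ fmax²]`, so `E_F` is nonincreasing and loses at most
`a τ fmax²` per unit of time.
-/

section Primitive

variable {a b M : ℝ} {g : ℝ → ℝ}

lemma integrableOn_of_ae_mem_Icc (hg : AEStronglyMeasurable g (volume.restrict (Icc a b)))
    (hb : ∀ᵐ u ∂(volume.restrict (Icc a b)), g u ∈ Icc 0 M) : IntegrableOn g (Icc a b) :=
  Integrable.of_bound hg M <| by
    filter_upwards [hb] with u hu
    rw [norm_of_nonneg hu.1]
    exact hu.2

lemma monotoneOn_integral_of_ae_nonneg (hgi : IntegrableOn g (Icc a b))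
    (hg : 0 ≤ᵐ[volume.restrict (Icc a b)] g) :
    MonotoneOn (fun t => ∫ u in a..t, g u) (Icc a b) := by
  intro s hs t ht hst
  have hsub : Icc a t ⊆ Icc a b := Icc_subset_Icc le_rfl ht.2
  exact intervalIntegral.integral_mono_interval le_rfl hs.1 hst
    (ae_restrict_of_ae_restrict_of_subset (Ioc_subset_Icc_self.trans hsub) hg)
    ((intervalIntegrable_iff_integrableOn_Icc_of_le ht.1).2 (hgi.mono_set hsub))

lemma integral_le_mul_of_ae_le (hgi : IntegrableOn g (Icc a b))
    (hg : ∀ᵐ u ∂(volume.restrict (Icc a b)), g u ≤ M) {t : ℝ} (ht : t ∈ Icc a b) :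
    ∫ u in a..t, g u ≤ M * (t - a) := by
  have hsub : Icc a t ⊆ Icc a b := Icc_subset_Icc le_rfl ht.2
  calc ∫ u in a..t, g u ≤ ∫ _ in a..t, M :=
        intervalIntegral.integral_mono_ae_restrict ht.1
          ((intervalIntegrable_iff_integrableOn_Icc_of_le ht.1).2 (hgi.mono_set hsub))
          intervalIntegrable_const
          (ae_restrict_of_ae_restrict_of_subset hsub hg)
    _ = M * (t - a) := by rw [intervalIntegral.integral_const, smul_eq_mul, mul_comm]

end Primitive

section Velocity

variable {τ t fmax : ℝ} {f : ℝ → ℝ}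

lemma runnerV_eq_exp_mul_integral (τ : ℝ) (f : ℝ → ℝ) (t : ℝ) :
    runnerV τ f t = exp (-t / τ) * ∫ u in (0:ℝ)..t, exp (u / τ) * f u := by
  rw [runnerV, ← intervalIntegral.integral_const_mul]
  congr 1 with u
  rw [← mul_assoc, ← exp_add]
  ring_nf

lemma runnerV_const (hτ : τ ≠ 0) (c t : ℝ) :
    runnerV τ (fun _ => c) t = c * τ * (1 - exp (-t / τ)) := by
  rw [runnerV_eq_exp_mul_integral, intervalIntegral.integral_mul_const,
    intervalIntegral.integral_comp_div (fun u => exp u) hτ, integral_exp, smul_eq_mul,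
    zero_div, exp_zero, neg_div]
  have : exp (-(t / τ)) * exp (t / τ) = 1 := by rw [← exp_add, neg_add_cancel, exp_zero]
  linear_combination (τ * c) * this

lemma runnerV_nonneg (ht : 0 ≤ t) (hf : 0 ≤ᵐ[volume.restrict (Icc 0 t)] f) :
    0 ≤ runnerV τ f t :=
  intervalIntegral.integral_nonneg_of_ae_restrict ht <| by
    filter_upwards [hf] with u hu
    exact mul_nonneg (exp_nonneg _) hu

lemma runnerV_le (hτ : 0 < τ) (hfmax : 0 ≤ fmax) (ht : 0 ≤ t)
    (hfi : IntegrableOn f (Icc 0 t)) (hf : ∀ᵐ u ∂(volume.restrict (Icc 0 t)), f u ≤ fmax) :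
    runnerV τ f t ≤ τ * fmax := by
  have hker : ContinuousOn (fun u => exp (-(t - u) / τ)) (Icc 0 t) := by fun_prop
  calc runnerV τ f t ≤ runnerV τ (fun _ => fmax) t :=
        intervalIntegral.integral_mono_ae_restrict ht
          ((intervalIntegrable_iff_integrableOn_Icc_of_le ht).2
            (hfi.continuousOn_mul hker isCompact_Icc))
          ((hker.mul continuousOn_const).intervalIntegrable_of_Icc ht) <| by
            filter_upwards [hf] with u hu
            exact mul_le_mul_of_nonneg_left hu (exp_nonneg _)
    _ = fmax * τ * (1 - exp (-t / τ)) := runnerV_const hτ.ne' fmax t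
    _ ≤ τ * fmax := by nlinarith [exp_nonneg (-t / τ), mul_nonneg hτ.le hfmax]

lemma continuousOn_runnerV {T : ℝ} (hfi : IntegrableOn f (Icc 0 T)) :
    ContinuousOn (runnerV τ f) (Icc 0 T) := by
  have hprim := intervalIntegral.continuousOn_primitive
    (hfi.continuousOn_mul (g := fun u => exp (u / τ)) (by fun_prop) isCompact_Icc)
  refine ((continuous_exp.comp (continuous_neg.div_const τ)).continuousOn.mul hprim).congr ?_
  intro t ht
  rw [runnerV_eq_exp_mul_integral, intervalIntegral.integral_of_le ht.1]
  rfl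

lemma runnerV_mem_Icc {T : ℝ} (hτ : 0 < τ) (hfmax : 0 ≤ fmax) (hfi : IntegrableOn f (Icc 0 T))
    (hf : ∀ᵐ u ∂(volume.restrict (Icc 0 T)), f u ∈ Icc 0 fmax) (ht : t ∈ Icc 0 T) :
    runnerV τ f t ∈ Icc 0 (τ * fmax) := by
  have hsub : Icc 0 t ⊆ Icc 0 T := Icc_subset_Icc le_rfl ht.2
  have hf' := ae_restrict_of_ae_restrict_of_subset hsub hf
  exact ⟨runnerV_nonneg ht.1 (hf'.mono fun _ hu => hu.1),
    runnerV_le hτ hfmax ht.1 (hfi.mono_set hsub) (hf'.mono fun _ hu => hu.2)⟩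

end Velocity

lemma mul_mul_one_sub_mem_Icc {x v γ X V : ℝ} (hx : x ∈ Icc 0 X) (hv : v ∈ Icc 0 V)
    (hγ : γ ∈ Icc 0 1) : x * v * (1 - γ) ∈ Icc 0 (X * V) := by
  have hxv : 0 ≤ x * v := mul_nonneg hx.1 hv.1
  refine ⟨mul_nonneg hxv (by linarith [hγ.2]), ?_⟩
  calc x * v * (1 - γ) ≤ x * v := mul_le_of_le_one_right hxv (by linarith [hγ.1])
    _ ≤ X * V := mul_le_mul hx.2 hv.2 hv.1 (hx.1.trans hx.2)

theorem fat_energy_never_tight_general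
    (T τ fmax a EF0 : ℝ) (hτ : 0 < τ) (hfmax : 0 < fmax)
    (ha : 0 < a)
    (glyc : ℝ → ℝ) (hglyc_cont : Continuous glyc)
    (hglyc_bds : ∀ v, 0 ≤ glyc v ∧ glyc v ≤ 1)
    (f : ℝ → ℝ) (hf_meas : Measurable f)
    (hf_bds : ∀ᵐ t ∂(volume.restrict (Icc (0:ℝ) T)), 0 ≤ f t ∧ f t ≤ fmax) :
    AntitoneOn (runnerEF τ a EF0 glyc f) (Icc (0:ℝ) T) ∧
    (∀ t ∈ Icc (0:ℝ) T, EF0 - a * τ * fmax ^ 2 * t ≤ runnerEF τ a EF0 glyc f t) ∧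
    (a * τ * fmax ^ 2 * T < EF0 → ∀ t ∈ Icc (0:ℝ) T, 0 < runnerEF τ a EF0 glyc f t) := by
  have hfi : IntegrableOn f (Icc 0 T) :=
    integrableOn_of_ae_mem_Icc hf_meas.aestronglyMeasurable hf_bds
  set g : ℝ → ℝ := fun u => f u * runnerV τ f u * (1 - glyc (runnerV τ f u))
  have hg_bds : ∀ᵐ u ∂(volume.restrict (Icc 0 T)), g u ∈ Icc 0 (τ * fmax ^ 2) := by
    filter_upwards [hf_bds, ae_restrict_mem measurableSet_Icc] with u hu ht
    rw [show τ * fmax ^ 2 = fmax * (τ * fmax) by ring]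
    exact mul_mul_one_sub_mem_Icc hu (runnerV_mem_Icc hτ hfmax.le hfi hf_bds ht)
      (hglyc_bds (runnerV τ f u))
  have hVc := continuousOn_runnerV (τ := τ) hfi
  have hgi : IntegrableOn g (Icc 0 T) := integrableOn_of_ae_mem_Icc
    ((hf_meas.aestronglyMeasurable.mul (hVc.aestronglyMeasurable measurableSet_Icc)).mul
      ((continuousOn_const.sub (hglyc_cont.comp_continuousOn hVc)).aestronglyMeasurable
        measurableSet_Icc)) hg_bds
  have hlower : ∀ t ∈ Icc 0 T, EF0 - a * τ * fmax ^ 2 * t ≤ runnerEF τ a EF0 glyc f t := by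
    intro t ht
    have hint := integral_le_mul_of_ae_le hgi (hg_bds.mono fun _ hu => hu.2) ht
    rw [sub_zero] at hint
    calc EF0 - a * τ * fmax ^ 2 * t = EF0 - a * (τ * fmax ^ 2 * t) := by ring
      _ ≤ runnerEF τ a EF0 glyc f t := sub_le_sub_left (mul_le_mul_of_nonneg_left hint ha.le) EF0
  refine ⟨fun s hs t ht hst => ?_, hlower, fun hbig t ht => ?_⟩
  · have hmono := monotoneOn_integral_of_ae_nonneg hgi (hg_bds.mono fun _ hu => hu.1) hs ht hst
    exact sub_le_sub_left (mul_le_mul_of_nonneg_left hmono ha.le) EF0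
  · have hloss : a * τ * fmax ^ 2 * t ≤ a * τ * fmax ^ 2 * T := by gcongr; exact ht.2
    linarith [hlower t ht]

theorem fat_energy_never_tight
    (T τ fmax a EF0 : ℝ) (hT : 0 < T) (hτ : 0 < τ) (hfmax : 0 < fmax)
    (ha : 0 < a) (hEF0 : 0 ≤ EF0)
    (glyc : ℝ → ℝ) (hglyc_cont : Continuous glyc)
    (hglyc_bds : ∀ v, 0 ≤ glyc v ∧ glyc v ≤ 1)
    (f : ℝ → ℝ) (hf_meas : Measurable f)
    (hf_bds : ∀ᵐ t ∂(volume.restrict (Icc (0:ℝ) T)), 0 ≤ f t ∧ f t ≤ fmax) :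
    AntitoneOn (runnerEF τ a EF0 glyc f) (Icc (0:ℝ) T) ∧
    (∀ t ∈ Icc (0:ℝ) T, EF0 - a * τ * fmax ^ 2 * t ≤ runnerEF τ a EF0 glyc f t) ∧
    (a * τ * fmax ^ 2 * T < EF0 → ∀ t ∈ Icc (0:ℝ) T, 0 < runnerEF τ a EF0 glyc f t) :=
  fat_energy_never_tight_general T τ fmax a EF0 hτ hfmax ha glyc hglyc_cont hglyc_bds f hf_meas
    hf_bds
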